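/- arXiv:1602.06940 — 2 statements merged into one kernel-verified Lean document; each statement's English description precedes it below -/
import Mathlib

section
/- In the two-agent manipulation setting, let S = {a₁,…,a_k} ⊆ O with a₁ ≻₂ a₂ ≻₂ ⋯ ≻₂ a_k. If S is achievable by agent 1, then under any canonical report for S, agent 1's allocation includes S. -/
/-- Sequential allocation: process the picking sequence in order; at each step the
agent whose turn it is receives his most-preferred (earliest in his ranking list)
item among those not yet allocated. Returns each agent's allocation. -/
def seqAlloc {A I : Type*} [DecidableEq A] [DecidableEq I]
    (prefs : A → List I) : List A → Finset I → A → Finset I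
  | [], _ => fun _ => ∅
  | a :: rest, rem =>
    match (prefs a).find? (fun o => decide (o ∈ rem)) with
    | none => seqAlloc prefs rest rem
    | some o => fun j =>
        if j = a then insert o (seqAlloc prefs rest (rem.erase o) j)
        else seqAlloc prefs rest (rem.erase o) j

/-- A report (strict linear order) over the item set `O`, given as a ranking list:
most preferred item first. -/
def IsReport {I : Type*} [DecidableEq I] (O : Finset I) (p : List I) : Prop :=
  p.Nodup ∧ ∀ o, o ∈ p ↔ o ∈ O

/-- Two-agent sequential allocation: agent `0` ("agent 1") reports `p1`,
agent `1` ("agent 2") reports `p2`. -/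
def alloc2 {I : Type*} [DecidableEq I] (p1 p2 : List I)
    (π : List (Fin 2)) (O : Finset I) : Fin 2 → Finset I :=
  seqAlloc (fun a => if a = 0 then p1 else p2) π O

/-- `S` is achievable by agent 1: some report gives agent 1 an allocation including `S`. -/
def Achievable {I : Type*} [DecidableEq I] (p2 : List I) (π : List (Fin 2))
    (O : Finset I) (S : Finset I) : Prop :=
  ∃ p1, IsReport O p1 ∧ S ⊆ alloc2 p1 p2 π O 0

/-- `o` is strictly preferred to `o'` in the ranking list `p`. -/
def Prefers {I : Type*} [DecidableEq I] (p : List I) (o o' : I) : Prop :=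
  p.idxOf o < p.idxOf o'

instance {I : Type*} [DecidableEq I] (p : List I) (o o' : I) : Decidable (Prefers p o o') :=
  inferInstanceAs (Decidable (_ < _))

/-- `u` is an additive utility consistent with the ranking `p` on item set `O`. -/
def Consistent {I : Type*} [DecidableEq I] (O : Finset I) (p : List I) (u : I → ℝ) : Prop :=
  (∀ o ∈ O, 0 < u o) ∧ ∀ o ∈ O, ∀ o' ∈ O, u o' < u o ↔ Prefers p o o'

/-!
Agent 2 picks deterministically, so whether agent 1 can obtain `S` is a one-player game in which
he may take any remaining item at each of his turns (`Securable`). If he can win by taking `y`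
now, he can also win by taking the ≻₂-best item `a` of `S` instead: in the position after the
pick, `y` replaces `a` in the pool, and agent 2 behaves differently only when he now takes `y`
at a turn where he took some `o` before. Then `y ≻₂ o ≻₂ a`, so `y ∉ S` (the items of `S` other
than `a` are ≻₂-worse than `a`), and the old winning line goes through with `o` in place of `y`.
The canonical report is exactly the strategy that always takes the ≻₂-best item of `S` still
to be obtained.
-/

section

variable {α : Type*} [DecidableEq α]

theorem List.idxOf_lt_idxOf_of_find?_eq_some {l : List α} {P : α → Bool} {o u : α}
    (ho : l.find? P = some o) (hu : u ∈ l) (hPu : P u) (hne : u ≠ o) :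
    l.idxOf o < l.idxOf u := by
  induction l with
  | nil => simp at hu
  | cons x l ih =>
    by_cases hx : P x
    · rw [List.find?_cons_of_pos hx, Option.some_inj] at ho
      subst ho
      rw [List.idxOf_cons_self, List.idxOf_cons_ne _ (Ne.symm hne)]
      exact Nat.succ_pos _
    · rw [List.find?_cons_of_neg hx] at ho
      have hxo : x ≠ o := fun h => hx (h ▸ List.find?_some ho)
      have hxu : x ≠ u := fun h => hx (h ▸ hPu)
      rw [List.idxOf_cons_ne _ hxo, List.idxOf_cons_ne _ hxu]
      exact Nat.succ_lt_succ (ih ho ((List.mem_cons.mp hu).resolve_left hxu.symm))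

theorem List.find?_mem_insert_erase {l : List α} {s : Finset α} {o u v : α}
    (ho : l.find? (· ∈ s) = some o) (hou : o ≠ u) :
    l.find? (· ∈ insert v (s.erase u)) = some o ∨
      (l.find? (· ∈ insert v (s.erase u)) = some v ∧ l.idxOf v < l.idxOf o) := by
  have hol : o ∈ l := List.mem_of_find?_eq_some ho
  have hos : o ∈ s := by simpa using List.find?_some ho
  have hos' : o ∈ insert v (s.erase u) := by simp [hos, hou]
  obtain ⟨o', ho'⟩ : ∃ o', l.find? (· ∈ insert v (s.erase u)) = some o' :=
    Option.isSome_iff_exists.mp (List.find?_isSome.mpr ⟨o, hol, by simpa using hos'⟩)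
  rw [ho']
  by_cases ho'o : o' = o
  · exact .inl (by rw [ho'o])
  have hlt := List.idxOf_lt_idxOf_of_find?_eq_some ho' hol (by simpa using hos') (Ne.symm ho'o)
  obtain rfl | ho's : o' = v ∨ o' ∈ s.erase u := by simpa using List.find?_some ho'
  · exact .inr ⟨rfl, hlt⟩
  · have := List.idxOf_lt_idxOf_of_find?_eq_some ho (List.mem_of_find?_eq_some ho')
      (by simpa using (Finset.mem_erase.mp ho's).2) ho'o
    omega

theorem seqAlloc_subset {A : Type*} [DecidableEq A] (prefs : A → List α) (π : List A)
    (rem : Finset α) (j : A) : seqAlloc prefs π rem j ⊆ rem := by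
  induction π generalizing rem with
  | nil => simp [seqAlloc]
  | cons a π ih =>
    rw [seqAlloc]
    rcases hf : (prefs a).find? (· ∈ rem) with _ | o <;> dsimp only
    · exact ih rem
    · have ho : o ∈ rem := by simpa using List.find?_some hf
      split_ifs
      · exact Finset.insert_subset ho ((ih _).trans (Finset.erase_subset _ _))
      · exact (ih _).trans (Finset.erase_subset _ _)

/-- Agent 1, choosing each of his picks freely, can still obtain `S` when the items `rem` are left
and the turns `π` are to come. Once he needs nothing more his turns do not matter, which covers
the turns at which no item is left. -/
def Securable (p2 : List α) : List (Fin 2) → Finset α → Finset α → Prop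
  | [], _, S => S = ∅
  | a :: π, rem, S =>
    if a = 0 then S = ∅ ∨ ∃ y ∈ rem, Securable p2 π (rem.erase y) (S.erase y)
    else
      match p2.find? (· ∈ rem) with
      | none => Securable p2 π rem S
      | some o => o ∉ S ∧ Securable p2 π (rem.erase o) S

namespace Securable

variable {p2 : List α} {π : List (Fin 2)} {rem S : Finset α}

theorem subset (h : Securable p2 π rem S) : S ⊆ rem := by
  induction π generalizing rem S with
  | nil => rw [Securable] at h; simp [h]
  | cons a π ih =>
    rw [Securable] at h
    split_ifs at h
    · obtain rfl | ⟨y, hy, h⟩ := h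
      · exact Finset.empty_subset _
      · rw [← Finset.insert_eq_of_mem hy, Finset.subset_insert_iff]
        exact (ih h).trans (Finset.erase_subset _ _)
    · split at h
      · exact ih h
      · exact (ih h.2).trans (Finset.erase_subset _ _)

theorem mono {S' : Finset α} (h : Securable p2 π rem S) (hS : S' ⊆ S) :
    Securable p2 π rem S' := by
  induction π generalizing rem S S' with
  | nil => rw [Securable] at h ⊢; exact Finset.subset_empty.mp (h ▸ hS)
  | cons a π ih =>
    rw [Securable] at h ⊢
    split_ifs at h ⊢
    · obtain rfl | ⟨y, hy, h⟩ := h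
      · exact .inl (Finset.subset_empty.mp hS)
      · exact .inr ⟨y, hy, ih h (Finset.erase_subset_erase _ hS)⟩
    · rcases hf : p2.find? (· ∈ rem) with _ | o <;> simp only [hf] at h ⊢
      · exact ih h hS
      · exact ⟨fun ho => h.1 (hS ho), ih h.2 hS⟩

theorem exchange {T T' : Finset α} {u v : α} (hp2 : ∀ x ∈ rem, x ∈ p2)
    (h : Securable p2 π rem T) (hu : u ∈ T) (hv : v ∉ rem)
    (hT' : T' ⊆ insert v (T.erase u)) (hpref : v ∈ T' → Prefers p2 u v) :
    Securable p2 π (insert v (rem.erase u)) T' := by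
  induction π generalizing rem T T' u v with
  | nil => rw [Securable] at h; simp [h] at hu
  | cons a π ih =>
    have hur : u ∈ rem := h.subset hu
    have hp2' : ∀ y, ∀ x ∈ rem.erase y, x ∈ p2 := fun y x hx => hp2 x (Finset.mem_of_mem_erase hx)
    rw [Securable] at h ⊢
    split_ifs at h ⊢
    · obtain rfl | ⟨y, hy, h⟩ := h
      · simp at hu
      right
      rcases eq_or_ne y u with rfl | hyu
      · refine ⟨v, Finset.mem_insert_self _ _, ?_⟩
        rw [Finset.erase_insert (fun h => hv (Finset.mem_of_mem_erase h))]
        refine h.mono fun x hx => ?_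
        have := hT' (Finset.mem_of_mem_erase hx)
        simp_all
      · have hyv : y ≠ v := fun h => hv (h ▸ hy)
        refine ⟨y, by simp [hy, hyu], ?_⟩
        rw [Finset.erase_insert_of_ne (Ne.symm hyv), Finset.erase_right_comm]
        refine ih (hp2' y) h (Finset.mem_erase.mpr ⟨Ne.symm hyu, hu⟩)
          (fun h => hv (Finset.mem_of_mem_erase h)) (fun x hx => ?_)
          (fun h => hpref (Finset.mem_of_mem_erase h))
        have := hT' (Finset.mem_of_mem_erase hx)
        simp_all
    · rcases hf : p2.find? (· ∈ rem) with _ | o <;> simp only [hf] at h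
      · have := List.find?_eq_none.mp hf u (hp2 u hur)
        simp_all
      obtain ⟨hoT, h⟩ := h
      have ho : o ∈ rem := by simpa using List.find?_some hf
      have hou : o ≠ u := fun h => hoT (h ▸ hu)
      have hov : o ≠ v := fun h => hv (h ▸ ho)
      have hoT' : o ∉ T' := fun h => by simpa [hov, hoT] using hT' h
      rcases List.find?_mem_insert_erase (v := v) hf hou with hf' | ⟨hf', hvo⟩ <;>
        simp only [hf']
      · refine ⟨hoT', ?_⟩
        rw [Finset.erase_insert_of_ne (Ne.symm hov), Finset.erase_right_comm]
        exact ih (hp2' o) h hu (fun h => hv (Finset.mem_of_mem_erase h)) hT' hpref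
      · have hvT' : v ∉ T' := fun hvT' => by
          have huv : p2.idxOf u < p2.idxOf v := hpref hvT'
          have := List.idxOf_lt_idxOf_of_find?_eq_some hf (hp2 u hur) (by simpa using hur) hou.symm
          omega
        refine ⟨hvT', ?_⟩
        rw [Finset.erase_insert (fun h => hv (Finset.mem_of_mem_erase h))]
        have := ih (hp2' o) h hu (Finset.notMem_erase o rem) (fun x hx => ?_) (absurd · hoT')
        · rwa [Finset.erase_right_comm, Finset.insert_erase (Finset.mem_erase.mpr ⟨hou, ho⟩)]
            at this
        · have hxv : x ≠ v := fun h => hvT' (h ▸ hx)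
          exact Finset.mem_insert_of_mem (by simpa [hxv] using hT' hx)

theorem erase_of_best {a : α} (hp2 : ∀ x ∈ rem, x ∈ p2) (ha : a ∈ S)
    (hbest : ∀ x ∈ S, x ≠ a → Prefers p2 a x)
    (h : ∃ y ∈ rem, Securable p2 π (rem.erase y) (S.erase y)) :
    Securable p2 π (rem.erase a) (S.erase a) := by
  obtain ⟨y, hy, h⟩ := h
  rcases eq_or_ne y a with rfl | hya
  · exact h
  have := h.exchange (u := a) (v := y) (fun x hx => hp2 x (Finset.mem_of_mem_erase hx))
    (Finset.mem_erase.mpr ⟨hya.symm, ha⟩) (Finset.notMem_erase y rem)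
    (fun x hx => by simp only [Finset.mem_insert, Finset.mem_erase] at hx ⊢; tauto)
    (fun hyS => hbest y (Finset.mem_of_mem_erase hyS) hya)
  rwa [Finset.erase_right_comm, Finset.insert_erase (Finset.mem_erase.mpr ⟨hya, hy⟩)] at this

theorem toFinset_subset_seqAlloc_append {as c t : List α} (hp2 : ∀ x ∈ rem, x ∈ p2)
    (hsorted : as.Pairwise (Prefers p2)) (hc : ∀ x ∈ c, x ∉ rem)
    (h : Securable p2 π rem as.toFinset) :
    as.toFinset ⊆ seqAlloc (fun a => if a = 0 then c ++ as ++ t else p2) π rem 0 := by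
  induction π generalizing rem as c with
  | nil => rw [Securable] at h; simp [h]
  | cons a π ih =>
    have hsub := h.subset
    rw [Securable] at h
    rw [seqAlloc]
    split_ifs at h with ha
    · subst ha
      obtain _ | ⟨hd, tl⟩ := as
      · simp
      have hhd : hd ∈ rem := hsub (by simp)
      have hhdtl : hd ∉ tl := fun h' => lt_irrefl _ (List.rel_of_pairwise_cons hsorted h')
      have hc' : c.find? (· ∈ rem) = none :=
        List.find?_eq_none.mpr fun x hx => by simpa using hc x hx
      have hfind : (c ++ hd :: tl ++ t).find? (· ∈ rem) = some hd := by
        simp [List.find?_append, hc', hhd]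
      obtain hS | hy := h
      · simp at hS
      have key := erase_of_best hp2 (by simp)
        (fun x hx hxhd => List.rel_of_pairwise_cons hsorted (by simpa [hxhd] using hx)) hy
      rw [List.toFinset_cons, Finset.erase_insert (by simpa using hhdtl)] at key
      have hc_hd : ∀ x ∈ c ++ [hd], x ∉ rem.erase hd := by
        simp only [List.mem_append, List.mem_singleton, Finset.mem_erase]
        rintro x (hx | rfl) ⟨hne, hxr⟩
        exacts [hc x hx hxr, hne rfl]
      have := ih (fun x hx => hp2 x (Finset.mem_of_mem_erase hx)) hsorted.of_cons hc_hd key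
      simp only [if_pos, hfind]
      rw [List.toFinset_cons]
      simpa using Finset.insert_subset_insert hd this
    · simp only [ha, if_false]
      rcases hf : p2.find? (· ∈ rem) with _ | o <;> simp only [hf] at h ⊢
      · exact ih hp2 hsorted hc h
      rw [if_neg (Ne.symm ha)]
      exact ih (fun x hx => hp2 x (Finset.mem_of_mem_erase hx)) hsorted
        (fun x hx hxo => hc x hx (Finset.mem_of_mem_erase hxo)) h.2

theorem of_subset_seqAlloc {p1 : List α} (hp1 : ∀ x ∈ rem, x ∈ p1)
    (h : S ⊆ seqAlloc (fun a => if a = 0 then p1 else p2) π rem 0) : Securable p2 π rem S := by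
  induction π generalizing rem S with
  | nil => rw [Securable]; simpa [seqAlloc] using h
  | cons a π ih =>
    rw [seqAlloc] at h
    rw [Securable]
    have hp1' : ∀ y, ∀ x ∈ rem.erase y, x ∈ p1 := fun y x hx => hp1 x (Finset.mem_of_mem_erase hx)
    split_ifs with ha
    · subst ha
      simp only [if_pos] at h
      rcases hf : p1.find? (· ∈ rem) with _ | y <;> simp only [hf, if_pos] at h
      · have hrem : rem = ∅ := Finset.eq_empty_of_forall_notMem fun x hx => by
          simpa [hx] using List.find?_eq_none.mp hf x (hp1 x hx)
        exact .inl (Finset.subset_empty.mp (hrem ▸ h.trans (seqAlloc_subset _ _ _ _)))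
      · have hy : y ∈ rem := by simpa using List.find?_some hf
        exact .inr ⟨y, hy, ih (hp1' y) (Finset.subset_insert_iff.mp h)⟩
    · simp only [ha, if_false] at h
      rcases hf : p2.find? (· ∈ rem) with _ | o <;> simp only [hf] at h ⊢
      · exact ih hp1 h
      rw [if_neg (Ne.symm ha)] at h
      have hS := h.trans (seqAlloc_subset _ _ _ _)
      exact ⟨fun ho => Finset.notMem_erase o rem (hS ho), ih (hp1' o) h⟩

end Securable

end

theorem statement1_general {I : Type*} [DecidableEq I]
    (O : Finset I) (π : List (Fin 2))
    (p2 : List I) (hp2 : IsReport O p2)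
    (as : List I)
    (hsorted : as.Pairwise (Prefers p2))
    (hach : Achievable p2 π O as.toFinset)
    (r : List I) (hpre : as <+: r) :
    as.toFinset ⊆ alloc2 r p2 π O 0 := by
  obtain ⟨p1, hp1, hS⟩ := hach
  obtain ⟨t, rfl⟩ := hpre
  have hsecure : Securable p2 π O as.toFinset :=
    Securable.of_subset_seqAlloc (fun x hx => (hp1.2 x).2 hx) hS
  exact hsecure.toFinset_subset_seqAlloc_append (c := [])
    (fun x hx => (hp2.2 x).2 hx) hsorted (by simp)

/-- Let `S = {a₁, …, a_k}` with `a₁ ≻₂ a₂ ≻₂ ⋯ ≻₂ a_k`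
(given as the list `as`, ≻₂-most-preferred first). If `S` is achievable by
agent 1, then under any canonical report for `S` (a report whose top `k` items
are `a₁, …, a_k` in this order), agent 1's allocation includes `S`. -/
theorem statement1 {I : Type*} [DecidableEq I]
    (O : Finset I) (π : List (Fin 2)) (hπ : π.length = O.card)
    (p2 : List I) (hp2 : IsReport O p2)
    (as : List I) (hnd : as.Nodup) (hasO : ∀ o ∈ as, o ∈ O)
    (hsorted : as.Pairwise (Prefers p2))
    (hach : Achievable p2 π O as.toFinset)
    (r : List I) (hr : IsReport O r) (hpre : as <+: r) :
    as.toFinset ⊆ alloc2 r p2 π O 0 :=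
  statement1_general O π p2 hp2 as hsorted hach r hpre
end

section
/- In the two-agent manipulation setting, let S = {a₁,…,a_k} ⊆ O with a₁ ≻₂ a₂ ≻₂ ⋯ ≻₂ a_k, and let ≻₁ᶜ be a canonical report for S. The following are equivalent: (i) S is achievable by agent 1; (ii) agent 1's allocation under (≻₁ᶜ, ≻₂) includes S; (iii) in the run of sequential allocation on (≻₁ᶜ, ≻₂), for each i ∈ {1,…,k}, every item that agent 2 has received before the step at which agent 1 makes his i-th pick is strictly preferred to a_i by agent 2 (with respect to ≻₂). -/
/-!
Fix `i`, put `a = as[i]`, and let `W` be the set of items that agent 2 ranks no lower than `a`.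
Agent 2 picks greedily, so in any run, once he has taken an item he ranks no higher than `a`, all
of `W` is gone and at least `|W|` steps have passed. Under a report that secures `S`, at agent 1's
`(i+1)`-st turn agent 1 holds only `i` items and agent 2 holds none of `as[0], …, as[i] ∈ W`, so
one of these is still available; hence everything agent 2 has taken lies in `W` minus these
`i + 1` items, and fewer than `|W|` steps have passed. Thus achievability forces (iii), whatever
agent 1 reports. Conversely, under (iii) the canonical report takes `as[i]` at its `(i+1)`-st
turn: it already holds `as[0], …, as[i-1]`, and agent 2 cannot hold `as[i]`.
-/

namespace List

variable {α : Type*}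

theorem IsPrefix.find?_eq_some_getElem {p : α → Bool} {l l' : List α} (hl : l <+: l')
    {j : ℕ} (hj : j < l.length) (hbefore : ∀ i (hi : i < j), p l[i] = false) (hpj : p l[j]) :
    l'.find? p = some l[j] := by
  refine (take_prefix (j + 1) l).trans hl |>.find?_eq_some ?_
  rw [← take_append_getElem hj, find?_append, List.find?_eq_none.mpr, find?_singleton, if_pos hpj]
  · rfl
  intro x hx
  obtain ⟨i, hi, rfl⟩ := mem_iff_getElem.mp hx
  simp only [length_take, lt_min_iff] at hi
  simpa [getElem_take] using hbefore i hi.1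

variable [DecidableEq α]

theorem count_take_lt_count_take {l : List α} {x : α} {t u : ℕ} (ht : t < l.length)
    (hxt : l[t] = x) (htu : t < u) : (l.take t).count x < (l.take u).count x :=
  calc (l.take t).count x < (l.take (t + 1)).count x := by
        simp [← take_append_getElem ht, count_append, hxt]
    _ ≤ (l.take u).count x := (take_sublist_take_left htu).count_le x

theorem eq_of_count_take_eq {l : List α} {x : α} {t u : ℕ} (ht : t < l.length)
    (hu : u < l.length) (hxt : l[t] = x) (hxu : l[u] = x)
    (h : (l.take t).count x = (l.take u).count x) : t = u := by
  rcases lt_trichotomy t u with htu | rfl | hut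
  · exact absurd h (count_take_lt_count_take ht hxt htu).ne
  · rfl
  · exact absurd h (count_take_lt_count_take hu hxu hut).ne'

theorem exists_count_take_eq {x : α} {l : List α} {i : ℕ} (hi : i < l.count x) :
    ∃ t, ∃ ht : t < l.length, l[t] = x ∧ (l.take t).count x = i := by
  induction l generalizing i with
  | nil => simp at hi
  | cons a l ih =>
    by_cases hax : a = x
    · subst hax
      cases i with
      | zero => exact ⟨0, by simp, rfl, by simp⟩
      | succ i =>
        obtain ⟨t, ht, hxt, hcount⟩ := ih (by simpa using hi)
        exact ⟨t + 1, by simpa using ht, hxt, by simpa using hcount⟩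
    · obtain ⟨t, ht, hxt, hcount⟩ := ih (by simpa [count_cons, hax] using hi)
      exact ⟨t + 1, by simpa using ht, hxt, by simpa [count_cons, hax] using hcount⟩

end List

theorem List.count_zero_add_count_one (l : List (Fin 2)) : l.count 0 + l.count 1 = l.length := by
  induction l with
  | nil => rfl
  | cons a l ih =>
    fin_cases a <;> simp <;> omega

section SequentialAllocation

variable {A I : Type*} [DecidableEq I]

def seqRemaining (prefs : A → List I) : List A → Finset I → Finset I
  | [], rem => rem
  | a :: rest, rem =>
    match (prefs a).find? (fun o => decide (o ∈ rem)) with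
    | none => seqRemaining prefs rest rem
    | some o => seqRemaining prefs rest (rem.erase o)

variable {prefs : A → List I} {a b : A} {rest : List A} {rem : Finset I} {o : I}

theorem seqRemaining_cons_of_find?_eq_none
    (h : (prefs a).find? (fun o => decide (o ∈ rem)) = none) :
    seqRemaining prefs (a :: rest) rem = seqRemaining prefs rest rem := by
  simp [seqRemaining, h]

theorem seqRemaining_cons_of_find?_eq_some
    (h : (prefs a).find? (fun o => decide (o ∈ rem)) = some o) :
    seqRemaining prefs (a :: rest) rem = seqRemaining prefs rest (rem.erase o) := by
  simp [seqRemaining, h]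

theorem mem_of_find?_mem_eq_some {l : List I}
    (h : l.find? (fun o => decide (o ∈ rem)) = some o) : o ∈ rem := by
  simpa using List.find?_some h

theorem seqRemaining_subset (l : List A) (rem : Finset I) : seqRemaining prefs l rem ⊆ rem := by
  induction l generalizing rem with
  | nil => exact subset_rfl
  | cons a rest ih =>
    rcases h : (prefs a).find? (fun o => decide (o ∈ rem)) with _ | o
    · rw [seqRemaining_cons_of_find?_eq_none h]; exact ih rem
    · rw [seqRemaining_cons_of_find?_eq_some h]; exact (ih _).trans (Finset.erase_subset _ _)

theorem card_sdiff_seqRemaining_le (l : List A) (rem : Finset I) :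
    (rem \ seqRemaining prefs l rem).card ≤ l.length := by
  induction l generalizing rem with
  | nil => simp [seqRemaining]
  | cons a rest ih =>
    rcases h : (prefs a).find? (fun o => decide (o ∈ rem)) with _ | o
    · rw [seqRemaining_cons_of_find?_eq_none h]
      exact (ih rem).trans (Nat.le_succ _)
    · rw [seqRemaining_cons_of_find?_eq_some h]
      have hsplit : rem \ seqRemaining prefs rest (rem.erase o) ⊆
          insert o (rem.erase o \ seqRemaining prefs rest (rem.erase o)) := by
        intro x hx
        by_cases hxo : x = o <;> simp_all
      calc _ ≤ _ := Finset.card_le_card hsplit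
        _ ≤ _ := Finset.card_insert_le _ _
        _ ≤ _ := Nat.succ_le_succ (ih _)

variable [DecidableEq A]

theorem seqAlloc_cons_of_find?_eq_none (h : (prefs a).find? (fun o => decide (o ∈ rem)) = none) :
    seqAlloc prefs (a :: rest) rem = seqAlloc prefs rest rem := by
  simp [seqAlloc, h]

theorem seqAlloc_cons_of_find?_eq_some
    (h : (prefs a).find? (fun o => decide (o ∈ rem)) = some o) (b : A) :
    seqAlloc prefs (a :: rest) rem b =
      if b = a then insert o (seqAlloc prefs rest (rem.erase o) b)
      else seqAlloc prefs rest (rem.erase o) b := by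
  simp [seqAlloc, h]

theorem seqAlloc_subset_s2 (l : List A) (rem : Finset I) (b : A) : seqAlloc prefs l rem b ⊆ rem := by
  induction l generalizing rem with
  | nil => exact Finset.empty_subset _
  | cons a rest ih =>
    rcases h : (prefs a).find? (fun o => decide (o ∈ rem)) with _ | o
    · rw [seqAlloc_cons_of_find?_eq_none h]; exact ih rem
    · rw [seqAlloc_cons_of_find?_eq_some h]
      have hsub := (ih (rem.erase o)).trans (Finset.erase_subset o rem)
      split_ifs
      · exact Finset.insert_subset (mem_of_find?_mem_eq_some h) hsub
      · exact hsub

theorem seqAlloc_append (l₁ l₂ : List A) (rem : Finset I) (b : A) :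
    seqAlloc prefs (l₁ ++ l₂) rem b =
      seqAlloc prefs l₁ rem b ∪ seqAlloc prefs l₂ (seqRemaining prefs l₁ rem) b := by
  induction l₁ generalizing rem with
  | nil => simp [seqAlloc, seqRemaining]
  | cons a rest ih =>
    rcases h : (prefs a).find? (fun o => decide (o ∈ rem)) with _ | o
    · rw [List.cons_append, seqAlloc_cons_of_find?_eq_none h, seqAlloc_cons_of_find?_eq_none h,
        seqRemaining_cons_of_find?_eq_none h]
      exact ih rem
    · rw [List.cons_append, seqAlloc_cons_of_find?_eq_some h, seqAlloc_cons_of_find?_eq_some h,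
        seqRemaining_cons_of_find?_eq_some h]
      split_ifs
      · rw [ih, Finset.insert_union]
      · exact ih _

theorem seqAlloc_mono {l₁ l₂ : List A} (h : l₁ <+: l₂) (rem : Finset I) (b : A) :
    seqAlloc prefs l₁ rem b ⊆ seqAlloc prefs l₂ rem b := by
  obtain ⟨l, rfl⟩ := h
  rw [seqAlloc_append]
  exact Finset.subset_union_left

theorem not_mem_seqRemaining_of_mem_seqAlloc {l : List A} {x : I}
    (hx : x ∈ seqAlloc prefs l rem b) : x ∉ seqRemaining prefs l rem := by
  induction l generalizing rem with
  | nil => simp [seqAlloc] at hx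
  | cons a rest ih =>
    rcases h : (prefs a).find? (fun o => decide (o ∈ rem)) with _ | o
    · rw [seqAlloc_cons_of_find?_eq_none h] at hx
      rw [seqRemaining_cons_of_find?_eq_none h]
      exact ih hx
    · rw [seqAlloc_cons_of_find?_eq_some h] at hx
      rw [seqRemaining_cons_of_find?_eq_some h]
      split_ifs at hx
      · rcases Finset.mem_insert.mp hx with rfl | hx
        · exact fun hx => Finset.notMem_erase x rem (seqRemaining_subset _ _ hx)
        · exact ih hx
      · exact ih hx

theorem disjoint_seqAlloc {l : List A} {b c : A} (hbc : b ≠ c) :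
    Disjoint (seqAlloc prefs l rem b) (seqAlloc prefs l rem c) := by
  induction l generalizing rem with
  | nil => exact Finset.disjoint_empty_left _
  | cons a rest ih =>
    rcases h : (prefs a).find? (fun o => decide (o ∈ rem)) with _ | o
    · rw [seqAlloc_cons_of_find?_eq_none h]; exact ih
    · have hfresh : ∀ d, o ∉ seqAlloc prefs rest (rem.erase o) d :=
        fun d ho => Finset.notMem_erase o rem (seqAlloc_subset_s2 _ _ d ho)
      rw [seqAlloc_cons_of_find?_eq_some h, seqAlloc_cons_of_find?_eq_some h]
      split_ifs with hb hc hc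
      · exact absurd (hb.trans hc.symm) hbc
      · exact Finset.disjoint_insert_left.mpr ⟨hfresh c, ih⟩
      · exact Finset.disjoint_insert_right.mpr ⟨hfresh b, ih⟩
      · exact ih

theorem mem_seqRemaining_or_exists_mem_seqAlloc (l : List A) {x : I} (hx : x ∈ rem) :
    x ∈ seqRemaining prefs l rem ∨ ∃ b, x ∈ seqAlloc prefs l rem b := by
  induction l generalizing rem with
  | nil => exact Or.inl hx
  | cons a rest ih =>
    rcases h : (prefs a).find? (fun o => decide (o ∈ rem)) with _ | o
    · rw [seqRemaining_cons_of_find?_eq_none h, seqAlloc_cons_of_find?_eq_none h]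
      exact ih hx
    · rw [seqRemaining_cons_of_find?_eq_some h]
      simp_rw [seqAlloc_cons_of_find?_eq_some h]
      by_cases hxo : x = o
      · exact Or.inr ⟨a, by simp [hxo]⟩
      · refine (ih (Finset.mem_erase.mpr ⟨hxo, hx⟩)).imp_right fun ⟨b, hb⟩ => ⟨b, ?_⟩
        split_ifs
        · exact Finset.mem_insert_of_mem hb
        · exact hb

theorem card_seqAlloc {l : List A} (hcov : ∀ c, ∀ o ∈ rem, o ∈ prefs c)
    (hlen : l.length ≤ rem.card) (b : A) : (seqAlloc prefs l rem b).card = l.count b := by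
  induction l generalizing rem with
  | nil => rfl
  | cons a rest ih =>
    obtain ⟨y, hy⟩ : rem.Nonempty := Finset.card_pos.mp (by simp at hlen; omega)
    obtain ⟨o, h⟩ : ∃ o, (prefs a).find? (fun o => decide (o ∈ rem)) = some o := by
      rw [← Option.isSome_iff_exists, List.find?_isSome]
      exact ⟨y, hcov a y hy, by simpa⟩
    have ho := mem_of_find?_mem_eq_some h
    have ih' := ih (fun c z hz => hcov c z (Finset.mem_of_mem_erase hz))
      (by rw [Finset.card_erase_of_mem ho]; simp at hlen; omega)
    rw [seqAlloc_cons_of_find?_eq_some h]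
    by_cases hba : b = a
    · rw [if_pos hba, Finset.card_insert_of_notMem
        fun h => Finset.notMem_erase o rem (seqAlloc_subset_s2 _ _ _ h), ih']
      simp [hba]
    · rw [if_neg hba, ih']
      simp [Ne.symm hba]

/-- An item missing from `l` has index `l.length`, so it counts as ranked below all of `l`. -/
theorem prefers_of_find?_eq_some {p : I → Bool} {l : List I} {x y : I} (h : l.find? p = some x)
    (hpy : p y) (hyx : y ≠ x) : Prefers l x y := by
  obtain ⟨hpx, pre, post, rfl, hpre⟩ := List.find?_eq_some_iff_append.mp h
  have hxpre : x ∉ pre := fun hmem => by simpa [hpx] using hpre x hmem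
  have hypre : y ∉ pre := fun hmem => by simpa [hpy] using hpre y hmem
  simp [Prefers, List.idxOf_append, hxpre, hypre, List.idxOf_cons_ne _ (Ne.symm hyx)]

theorem prefers_of_mem_seqAlloc_of_mem_seqRemaining {l : List A} {x y : I}
    (hx : x ∈ seqAlloc prefs l rem b) (hy : y ∈ seqRemaining prefs l rem) :
    Prefers (prefs b) x y := by
  induction l generalizing rem with
  | nil => simp [seqAlloc] at hx
  | cons a rest ih =>
    rcases h : (prefs a).find? (fun o => decide (o ∈ rem)) with _ | o
    · rw [seqAlloc_cons_of_find?_eq_none h] at hx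
      rw [seqRemaining_cons_of_find?_eq_none h] at hy
      exact ih hx hy
    · rw [seqAlloc_cons_of_find?_eq_some h] at hx
      rw [seqRemaining_cons_of_find?_eq_some h] at hy
      split_ifs at hx with hba
      · rcases Finset.mem_insert.mp hx with rfl | hx
        · subst hba
          have hy' := Finset.mem_erase.mp (seqRemaining_subset _ _ hy)
          exact prefers_of_find?_eq_some h (by simpa using hy'.2) hy'.1
        · exact ih hx hy
      · exact ih hx hy

theorem mem_seqAlloc_append_singleton {l : List A}
    (h : (prefs b).find? (fun o => decide (o ∈ seqRemaining prefs l rem)) = some o) :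
    o ∈ seqAlloc prefs (l ++ [b]) rem b := by
  rw [seqAlloc_append, seqAlloc_cons_of_find?_eq_some h, if_pos rfl]
  exact Finset.mem_union_right _ (Finset.mem_insert_self _ _)

theorem exists_mem_seqRemaining_of_card_seqAlloc_lt {l : List A} {T : Finset I} (hT : T ⊆ rem)
    (hothers : ∀ c ≠ b, Disjoint (seqAlloc prefs l rem c) T)
    (hcard : (seqAlloc prefs l rem b).card < T.card) :
    ∃ x ∈ T, x ∈ seqRemaining prefs l rem := by
  by_contra! hgone
  refine hcard.not_ge (Finset.card_le_card fun x hx => ?_)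
  obtain hrem | ⟨c, hc⟩ := mem_seqRemaining_or_exists_mem_seqAlloc l (hT hx)
  · exact absurd hrem (hgone x hx)
  · by_cases hcb : c = b
    · exact hcb ▸ hc
    · exact absurd hx (Finset.disjoint_left.mp (hothers c hcb) hc)

theorem card_le_length_of_mem_seqAlloc {l : List A} {o a : I} (ho : o ∈ seqAlloc prefs l rem b)
    (hworse : ¬Prefers (prefs b) o a) :
    {x ∈ rem | (prefs b).idxOf x ≤ (prefs b).idxOf a}.card ≤ l.length := by
  refine le_trans (Finset.card_le_card fun x hx => ?_)
    (card_sdiff_seqRemaining_le (prefs := prefs) l rem)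
  obtain ⟨hx, hxa⟩ := Finset.mem_filter.mp hx
  refine Finset.mem_sdiff.mpr ⟨hx, fun hxl => ?_⟩
  have := prefers_of_mem_seqAlloc_of_mem_seqRemaining ho hxl
  simp only [Prefers] at this hworse
  omega

theorem getElem_mem_seqAlloc_take {l : List A} {as : List I} (hpre : as <+: prefs b)
    (has : ∀ x ∈ as, x ∈ rem)
    (hfree : ∀ u (hu : u < l.length), l[u] = b → ∀ hj : (l.take u).count b < as.length,
      ∀ c ≠ b, as[(l.take u).count b] ∉ seqAlloc prefs (l.take u) rem c)
    {u : ℕ} (hu : u ≤ l.length) {j : ℕ} (hj : j < as.length) (hju : j < (l.take u).count b) :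
    as[j] ∈ seqAlloc prefs (l.take u) rem b := by
  induction u generalizing j with
  | zero => simp at hju
  | succ u ih =>
    have hul : u < l.length := hu
    rw [← List.take_append_getElem hul] at hju ⊢
    have hmono := seqAlloc_mono (List.prefix_append (l.take u) [l[u]]) rem b (prefs := prefs)
    rw [List.count_append, List.count_singleton] at hju
    by_cases hjold : j < (l.take u).count b
    · exact hmono (ih hul.le hj hjold)
    have hlb : l[u] = b := by by_contra h; simp [beq_iff_eq, h] at hju; omega
    obtain rfl : j = (l.take u).count b := by simp [hlb] at hju; omega
    by_cases hheld : as[(l.take u).count b] ∈ seqAlloc prefs (l.take u) rem b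
    · exact hmono hheld
    have hremaining : as[(l.take u).count b] ∈ seqRemaining prefs (l.take u) rem := by
      obtain hrem | ⟨c, hc⟩ :=
        mem_seqRemaining_or_exists_mem_seqAlloc (l.take u) (has _ (List.getElem_mem hj))
      · exact hrem
      · by_cases hcb : c = b
        · exact absurd (hcb ▸ hc) hheld
        · exact absurd hc (hfree u hul hlb hj c hcb)
    rw [hlb]
    refine mem_seqAlloc_append_singleton
      (hpre.find?_eq_some_getElem hj (fun i hi => ?_) (by simpa using hremaining))
    simpa using not_mem_seqRemaining_of_mem_seqAlloc (ih hul.le (hi.trans hj) hi)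

end SequentialAllocation

section TwoAgents

variable {I : Type*} [DecidableEq I]

def remaining2 (p1 p2 : List I) (π : List (Fin 2)) (O : Finset I) : Finset I :=
  seqRemaining (fun a => if a = 0 then p1 else p2) π O

theorem IsReport.mem {O : Finset I} {p : List I} (hp : IsReport O p) {o : I} (ho : o ∈ O) :
    o ∈ p :=
  (hp.2 o).2 ho

theorem IsReport.mem_ite {O : Finset I} {p1 p2 : List I} (hp1 : IsReport O p1)
    (hp2 : IsReport O p2) (c : Fin 2) {o : I} (ho : o ∈ O) : o ∈ if c = 0 then p1 else p2 := by
  fin_cases c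
  exacts [hp1.mem ho, hp2.mem ho]

theorem card_alloc2_take {O : Finset I} {π : List (Fin 2)} (hπ : π.length = O.card)
    {p1 p2 : List I} (hp1 : IsReport O p1) (hp2 : IsReport O p2) (t : ℕ) (c : Fin 2) :
    (alloc2 p1 p2 (π.take t) O c).card = (π.take t).count c :=
  card_seqAlloc (fun c _ => hp1.mem_ite hp2 c) (by simp [hπ]) c

theorem idxOf_le_of_mem_take_of_pairwise_prefers {p as : List I}
    (hsorted : as.Pairwise (Prefers p)) {i : ℕ} (hi : i < as.length) {x : I}
    (hx : x ∈ as.take (i + 1)) : p.idxOf x ≤ p.idxOf as[i] := by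
  obtain ⟨j, hj, rfl⟩ := List.mem_iff_getElem.mp hx
  simp only [List.length_take, lt_min_iff] at hj
  rw [List.getElem_take]
  rcases (Nat.lt_succ_iff.mp hj.1).lt_or_eq with hji | rfl
  · exact (List.pairwise_iff_getElem.mp hsorted j i hj.2 hi hji).le
  · exact le_rfl

theorem disjoint_alloc2_take_one {O : Finset I} {π : List (Fin 2)} {p1 p2 as : List I}
    (hS : as.toFinset ⊆ alloc2 p1 p2 π O 0) (t : ℕ) :
    Disjoint (alloc2 p1 p2 (π.take t) O 1) as.toFinset :=
  ((disjoint_seqAlloc (by decide : (1 : Fin 2) ≠ 0)).mono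
    (seqAlloc_mono (List.take_prefix t π) O 1) hS)

theorem exists_mem_take_mem_remaining2 {O : Finset I} {π : List (Fin 2)} {p1 p2 as : List I}
    (hS : as.toFinset ⊆ alloc2 p1 p2 π O 0) (hπ : π.length = O.card) (hp1 : IsReport O p1)
    (hp2 : IsReport O p2) (hnd : as.Nodup) {i : ℕ} (hi : i < as.length) {t : ℕ}
    (hcount : (π.take t).count 0 = i) :
    ∃ y ∈ as.take (i + 1), y ∈ remaining2 p1 p2 (π.take t) O := by
  have hearly : (as.take (i + 1)).toFinset ⊆ as.toFinset := fun x hx =>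
    List.mem_toFinset.mpr (List.mem_of_mem_take (List.mem_toFinset.mp hx))
  obtain ⟨y, hy, hyrem⟩ := exists_mem_seqRemaining_of_card_seqAlloc_lt
    (prefs := fun c => if c = 0 then p1 else p2) (l := π.take t) (b := 0)
    (hearly.trans (hS.trans (seqAlloc_subset_s2 _ _ _)))
    (fun c hc => by
      obtain rfl : c = 1 := by omega
      exact (disjoint_alloc2_take_one hS t).mono_right hearly)
    ((card_alloc2_take hπ hp1 hp2 t 0).trans_lt (by
      rw [hcount, List.toFinset_card_of_nodup ((List.take_sublist _ _).nodup hnd),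
        List.length_take]
      omega))
  exact ⟨y, List.mem_toFinset.mp hy, hyrem⟩

theorem length_lt_card_of_subset_alloc2 {O : Finset I} {π : List (Fin 2)} {p1 p2 as : List I}
    (hS : as.toFinset ⊆ alloc2 p1 p2 π O 0) (hπ : π.length = O.card) (hp1 : IsReport O p1)
    (hp2 : IsReport O p2) (hnd : as.Nodup) (hsorted : as.Pairwise (Prefers p2)) {i : ℕ}
    (hi : i < as.length) {t : ℕ} (ht : t ≤ π.length) (hcount : (π.take t).count 0 = i) :
    t < {x ∈ O | p2.idxOf x ≤ p2.idxOf as[i]}.card := by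
  set W := {x ∈ O | p2.idxOf x ≤ p2.idxOf as[i]}
  set early := (as.take (i + 1)).toFinset
  have hearlyS : early ⊆ as.toFinset := fun x hx =>
    List.mem_toFinset.mpr (List.mem_of_mem_take (List.mem_toFinset.mp hx))
  have hearlyW : early ⊆ W := fun x hx => Finset.mem_filter.mpr
    ⟨seqAlloc_subset_s2 _ _ _ (hS (hearlyS hx)),
      idxOf_le_of_mem_take_of_pairwise_prefers hsorted hi (List.mem_toFinset.mp hx)⟩
  have hearlyCard : early.card = i + 1 := by
    rw [List.toFinset_card_of_nodup ((List.take_sublist _ _).nodup hnd), List.length_take]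
    omega
  obtain ⟨y, hyearly, hyrem⟩ := exists_mem_take_mem_remaining2 hS hπ hp1 hp2 hnd hi hcount
  have hya := (Finset.mem_filter.mp (hearlyW (List.mem_toFinset.mpr hyearly))).2
  -- `y` is still available to agent 2, so he has only taken items he ranks above `y`.
  have h2W : alloc2 p1 p2 (π.take t) O 1 ⊆ W \ early := fun x hx => by
    have hxy : Prefers p2 x y := prefers_of_mem_seqAlloc_of_mem_seqRemaining hx hyrem
    simp only [Prefers] at hxy
    refine Finset.mem_sdiff.mpr
      ⟨Finset.mem_filter.mpr ⟨seqAlloc_subset_s2 _ _ _ hx, by omega⟩, fun hxe => ?_⟩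
    exact Finset.disjoint_left.mp (disjoint_alloc2_take_one hS t) hx (hearlyS hxe)
  calc t = (π.take t).count 0 + (π.take t).count 1 := by
        rw [List.count_zero_add_count_one, List.length_take]
        omega
    _ = i + (alloc2 p1 p2 (π.take t) O 1).card := by rw [hcount, card_alloc2_take hπ hp1 hp2]
    _ ≤ i + (W \ early).card := by grw [Finset.card_le_card h2W]
    _ = i + (W.card - (i + 1)) := by rw [Finset.card_sdiff_of_subset hearlyW, hearlyCard]
    _ < W.card := by
      have := Finset.card_le_card hearlyW
      omega

/-- Condition (iii) of the theorem. -/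
def OpponentPicksBetter (r p2 : List I) (π : List (Fin 2)) (O : Finset I) (as : List I) : Prop :=
  ∀ (i : ℕ) (hi : i < as.length), ∃ (t : ℕ) (ht : t < π.length),
    π.get ⟨t, ht⟩ = 0 ∧ (π.take t).count 0 = i ∧
    ∀ o ∈ alloc2 r p2 (π.take t) O 1, Prefers p2 o (as.get ⟨i, hi⟩)

theorem opponentPicksBetter_of_achievable {O : Finset I} {π : List (Fin 2)}
    (hπ : π.length = O.card) {p2 : List I} (hp2 : IsReport O p2) {as : List I} (hnd : as.Nodup)
    (hsorted : as.Pairwise (Prefers p2)) (hach : Achievable p2 π O as.toFinset) (r : List I) :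
    OpponentPicksBetter r p2 π O as := by
  obtain ⟨p1, hp1, hS⟩ := hach
  intro i hi
  have hturns : as.length ≤ π.count 0 := by
    have := card_alloc2_take hπ hp1 hp2 π.length 0
    rw [List.take_length] at this
    rw [← List.toFinset_card_of_nodup hnd, ← this]
    exact Finset.card_le_card hS
  obtain ⟨t, ht, ht0, hcount⟩ := List.exists_count_take_eq (hi.trans_le hturns)
  refine ⟨t, ht, ht0, hcount, fun o ho => ?_⟩
  by_contra hworse
  have hlate : {x ∈ O | p2.idxOf x ≤ p2.idxOf as[i]}.card ≤ (π.take t).length :=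
    card_le_length_of_mem_seqAlloc (b := 1) ho hworse
  have hearly := length_lt_card_of_subset_alloc2 hS hπ hp1 hp2 hnd hsorted hi ht.le hcount
  rw [List.length_take] at hlate
  omega

theorem subset_alloc2_of_opponentPicksBetter {O : Finset I} {π : List (Fin 2)} {p2 r as : List I}
    (hasO : ∀ o ∈ as, o ∈ O) (hpre : as <+: r) (h : OpponentPicksBetter r p2 π O as) :
    as.toFinset ⊆ alloc2 r p2 π O 0 := by
  have hfree : ∀ u (hu : u < π.length), π[u] = 0 → ∀ hj : (π.take u).count 0 < as.length,
      ∀ c ≠ 0, as[(π.take u).count 0] ∉ alloc2 r p2 (π.take u) O c := by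
    intro u hu hu0 hj c hc hmem
    obtain ⟨t, ht, ht0, htu, hbetter⟩ := h _ hj
    obtain rfl := List.eq_of_count_take_eq ht hu ht0 hu0 htu
    obtain rfl : c = 1 := by omega
    exact lt_irrefl _ (hbetter _ hmem)
  intro x hx
  obtain ⟨i, hi, rfl⟩ := List.getElem_of_mem (List.mem_toFinset.mp hx)
  obtain ⟨t, ht, ht0, hcount, -⟩ := h i hi
  refine seqAlloc_mono (List.take_prefix (t + 1) π) O 0
    (getElem_mem_seqAlloc_take (prefs := fun c => if c = 0 then r else p2) hpre hasO hfree ht hi ?_)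
  rw [← List.take_append_getElem ht, List.count_append]
  simp_all

end TwoAgents

/-- Let `S = {a₁, …, a_k}` with `a₁ ≻₂ a₂ ≻₂ ⋯ ≻₂ a_k` (the list
`as`), and let `r` be a canonical report for `S`.  TFAE:
(i) `S` is achievable by agent 1;
(ii) agent 1's allocation under `(r, p2)` includes `S`;
(iii) in the run of sequential allocation on `(r, p2)`, for each `i`, at the step
at which agent 1 makes his `(i+1)`-st pick, every item agent 2 has received before
that step is strictly ≻₂-preferred to `aᵢ₊₁`. -/
theorem statement2 {I : Type*} [DecidableEq I]
    (O : Finset I) (π : List (Fin 2)) (hπ : π.length = O.card)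
    (p2 : List I) (hp2 : IsReport O p2)
    (as : List I) (hnd : as.Nodup) (hasO : ∀ o ∈ as, o ∈ O)
    (hsorted : as.Pairwise (Prefers p2))
    (r : List I) (hr : IsReport O r) (hpre : as <+: r) :
    (Achievable p2 π O as.toFinset ↔ as.toFinset ⊆ alloc2 r p2 π O 0) ∧
    (as.toFinset ⊆ alloc2 r p2 π O 0 ↔
      ∀ (i : ℕ) (hi : i < as.length), ∃ (t : ℕ) (ht : t < π.length),
        π.get ⟨t, ht⟩ = 0 ∧ (π.take t).count 0 = i ∧
        ∀ o ∈ alloc2 r p2 (π.take t) O 1, Prefers p2 o (as.get ⟨i, hi⟩)) := by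
  have hiii : Achievable p2 π O as.toFinset → OpponentPicksBetter r p2 π O as :=
    fun hach => opponentPicksBetter_of_achievable hπ hp2 hnd hsorted hach r
  have hii : OpponentPicksBetter r p2 π O as → as.toFinset ⊆ alloc2 r p2 π O 0 :=
    subset_alloc2_of_opponentPicksBetter hasO hpre
  have hi : as.toFinset ⊆ alloc2 r p2 π O 0 → Achievable p2 π O as.toFinset :=
    fun h => ⟨r, hr, h⟩
  exact ⟨⟨hii ∘ hiii, hi⟩, hiii ∘ hi, hii⟩
end
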